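/- arXiv:1601.08112 — 2 statements merged into one kernel-verified Lean document; each statement's English description precedes it below -/
import Mathlib

section
/- Let H be a K×M complex matrix with rank K, α ≥ 0, σ > 0, H_α = H†(αI + HH†)^{-1}, H_MMSE = H_{σ²}, and d any real number. Then the K×K matrix d²I_K − 2d·HH_α + HH_α · H_MMSE⁺ · H_α is positive definite, where H_MMSE⁺ denotes the Moore–Penrose pseudo-inverse; in particular there exists a matrix T with T†T = d²I_K − 2d·HH_α + HH_α H_MMSE⁺ H_α. -/
open Matrix ComplexOrder

/-- Moore–Penrose pseudo-inverse of a full-column-rank matrix. -/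
noncomputable def pinv {M K : ℕ} (A : Matrix (Fin M) (Fin K) ℂ) : Matrix (Fin K) (Fin M) ℂ :=
  (Aᴴ * A)⁻¹ * Aᴴ

/-!
Write `B = H Hᴴ` (positive definite, since `H` has full row rank) and `S c = c I + B`. Then
`H H_α = B (S α)⁻¹` and `H_MMSE⁺ H_α = S σ² (S α)⁻¹`, and since `B` commutes with `(S α)⁻¹` the
matrix completes to a square:
`(d I - B (S α)⁻¹)² + σ² (S α)⁻¹ B (S α)⁻¹`.
The first term is the square of a Hermitian matrix, the second a congruence of `B`.
-/

namespace Matrix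

variable {n m 𝕜 : Type*} [DecidableEq n] [RCLike 𝕜]

theorem PosDef.smul_one_add {B : Matrix n n 𝕜} (hB : B.PosDef) {c : 𝕜} (hc : 0 ≤ c) :
    (c • 1 + B).PosDef :=
  PosDef.posSemidef_add (PosSemidef.one.smul hc) hB

variable [Fintype n] [Fintype m]

theorem isUnit_of_rank_eq_card {K : Type*} [Field K] {B : Matrix n n K}
    (h : B.rank = Fintype.card n) : IsUnit B := by
  rw [← mulVec_surjective_iff_isUnit, ← coe_mulVecLin, ← LinearMap.range_eq_top]
  apply Submodule.eq_top_of_finrank_eq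
  rw [← rank, h, Module.finrank_fintype_fun_eq_card]

theorem posDef_mul_conjTranspose_self_of_rank_eq_card {H : Matrix n m 𝕜}
    (h : H.rank = Fintype.card n) : (H * Hᴴ).PosDef :=
  (posSemidef_self_mul_conjTranspose H).posDef_iff_isUnit.mpr <|
    isUnit_of_rank_eq_card (by rw [rank_self_mul_conjTranspose, h])

theorem PosSemidef.exists_conjTranspose_mul_self_eq {A : Matrix n n 𝕜} (hA : A.PosSemidef) :
    ∃ T : Matrix n n 𝕜, Tᴴ * T = A := by
  open scoped MatrixOrder in
  obtain ⟨T, hT⟩ := CStarAlgebra.nonneg_iff_eq_star_mul_self.mp hA.nonneg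
  exact ⟨T, hT.symm⟩

theorem smul_sq_sub_add_eq_of_commute {R : Type*} [CommRing R] {B Q : Matrix n n R}
    (hBQ : Commute B Q) (d s : R) :
    d ^ 2 • (1 : Matrix n n R) - (2 * d) • (B * Q) + B * Q * ((s • 1 + B) * Q) =
      (d • 1 - B * Q) * (d • 1 - B * Q) + s • (Q * B * Q) := by
  simp only [Matrix.mul_add, Matrix.add_mul, Matrix.sub_mul, Matrix.mul_sub, Matrix.smul_mul,
    Matrix.mul_smul, Matrix.one_mul, Matrix.mul_one, hBQ.eq, Matrix.mul_assoc]
  module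

theorem commute_inv_smul_one_add (B : Matrix n n 𝕜) (c : 𝕜) : Commute B (c • 1 + B)⁻¹ := by
  have h : Commute B (c • 1 + B) := ((Commute.one_right B).smul_right c).add_right (.refl B)
  by_cases hu : IsUnit (c • 1 + B)
  · simpa only [IsUnit.unit_spec, coe_units_inv] using h.units_inv_right (u := hu.unit)
  · rw [nonsing_inv_apply_not_isUnit _ (mt (isUnit_iff_isUnit_det _).mpr hu)]
    exact .zero_right B

theorem posDef_smul_sq_sub_add {B : Matrix n n 𝕜} (hB : B.PosDef) {a s : ℝ} (ha : 0 ≤ a)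
    (hs : 0 < s) (d : ℝ) :
    ((d : 𝕜) ^ 2 • (1 : Matrix n n 𝕜) - (2 * (d : 𝕜)) • (B * ((a : 𝕜) • 1 + B)⁻¹) +
      B * ((a : 𝕜) • 1 + B)⁻¹ * (((s : 𝕜) • 1 + B) * ((a : 𝕜) • 1 + B)⁻¹)).PosDef := by
  set Q := ((a : 𝕜) • 1 + B)⁻¹
  have hQ : Q.PosDef := (hB.smul_one_add (RCLike.ofReal_nonneg.mpr ha)).inv
  have hBQ : Commute B Q := commute_inv_smul_one_add B a
  have hX : ((d : 𝕜) • 1 - B * Q).IsHermitian := by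
    have := (hB.isHermitian.commute_iff hQ.isHermitian).mp hBQ
    simp [IsHermitian, this.eq]
  have hXX : (((d : 𝕜) • 1 - B * Q) * ((d : 𝕜) • 1 - B * Q)).PosSemidef := by
    have := posSemidef_conjTranspose_mul_self ((d : 𝕜) • 1 - B * Q)
    rwa [hX.eq] at this
  rw [smul_sq_sub_add_eq_of_commute hBQ]
  refine PosDef.posSemidef_add hXX (PosDef.smul ?_ ?_)
  · nth_rw 1 [← hQ.isHermitian.eq]
    exact hB.conjTranspose_mul_mul_same (mulVec_injective_iff_isUnit.mpr hQ.isUnit)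
  · exact RCLike.ofReal_pos.mpr hs

end Matrix

theorem pinv_conjTranspose_mul_inv_mul {K M : ℕ} (H : Matrix (Fin K) (Fin M) ℂ)
    {S : Matrix (Fin K) (Fin K) ℂ} (hHH : IsUnit (H * Hᴴ)) (hS : S.IsHermitian) (hSu : IsUnit S)
    (T : Matrix (Fin K) (Fin K) ℂ) :
    pinv (Hᴴ * S⁻¹) * (Hᴴ * T) = S * T := by
  have hSdet : IsUnit S.det := (isUnit_iff_isUnit_det S).mp hSu
  have hBdet : IsUnit (H * Hᴴ).det := (isUnit_iff_isUnit_det _).mp hHH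
  have hadj : (Hᴴ * S⁻¹)ᴴ = S⁻¹ * H := by
    rw [conjTranspose_mul, conjTranspose_conjTranspose, hS.inv.eq]
  have hgram : ((Hᴴ * S⁻¹)ᴴ * (Hᴴ * S⁻¹))⁻¹ = S * (H * Hᴴ)⁻¹ * S := by
    rw [hadj, show S⁻¹ * H * (Hᴴ * S⁻¹) = S⁻¹ * (H * Hᴴ) * S⁻¹ by simp only [Matrix.mul_assoc],
      Matrix.mul_inv_rev, Matrix.mul_inv_rev, nonsing_inv_nonsing_inv _ hSdet, Matrix.mul_assoc]
  rw [pinv, hgram, hadj]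
  calc S * (H * Hᴴ)⁻¹ * S * (S⁻¹ * H) * (Hᴴ * T)
      = S * ((H * Hᴴ)⁻¹ * (S * S⁻¹) * (H * Hᴴ)) * T := by simp only [Matrix.mul_assoc]
    _ = S * T := by
      rw [mul_nonsing_inv _ hSdet, Matrix.mul_one, nonsing_inv_mul _ hBdet, Matrix.mul_one]

theorem stmt5 (K M : ℕ) (H : Matrix (Fin K) (Fin M) ℂ) (hrank : H.rank = K)
    (α : ℝ) (hα : 0 ≤ α) (σ : ℝ) (hσ : 0 < σ) (d : ℝ)
    (Hα : Matrix (Fin M) (Fin K) ℂ)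
    (hHα : Hα = Hᴴ * ((α : ℂ) • (1 : Matrix (Fin K) (Fin K) ℂ) + H * Hᴴ)⁻¹)
    (HM : Matrix (Fin M) (Fin K) ℂ)
    (hHM : HM = Hᴴ * (((σ ^ 2 : ℝ) : ℂ) • (1 : Matrix (Fin K) (Fin K) ℂ) + H * Hᴴ)⁻¹)
    (A : Matrix (Fin K) (Fin K) ℂ)
    (hA : A = ((d : ℂ) ^ 2) • (1 : Matrix (Fin K) (Fin K) ℂ)
        - (2 * (d : ℂ)) • (H * Hα) + H * Hα * pinv HM * Hα) :
    A.PosDef ∧ ∃ T : Matrix (Fin K) (Fin K) ℂ, Tᴴ * T = A := by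
  have hB : (H * Hᴴ).PosDef :=
    posDef_mul_conjTranspose_self_of_rank_eq_card (by rw [hrank, Fintype.card_fin])
  have hSσ : (((σ ^ 2 : ℝ) : ℂ) • 1 + H * Hᴴ).PosDef :=
    hB.smul_one_add (Complex.zero_le_real.mpr (sq_nonneg σ))
  have hApos : A.PosDef := by
    rw [hA, Matrix.mul_assoc (H * Hα), hHM, hHα,
      pinv_conjTranspose_mul_inv_mul H hB.isUnit hSσ.isHermitian hSσ.isUnit, ← Matrix.mul_assoc H]
    exact posDef_smul_sq_sub_add hB hα (pow_pos hσ 2) d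
  exact ⟨hApos, hApos.posSemidef.exists_conjTranspose_mul_self_eq⟩
end

section
/- Fix c with 0 < c < 1. Then as σ² → 0⁺, −log₂(1 − d(c,σ²)) = log₂(1/σ²) + log₂((1−c)/c) + O(1); more precisely, the limit lim_{σ²→0⁺} [ −log₂(1 − d(c,σ²)) − log₂(1/σ²) ] = log₂((1−c)/c). -/
open Filter

/-- The large-system limit of `tr(H H_α)/K`. -/
noncomputable def dCA (c α : ℝ) : ℝ :=
  (1 + c + c * α - Real.sqrt (1 + 2 * c * (α - 1) + c ^ 2 * (1 + α) ^ 2)) / (2 * c)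

theorem stmt12 (c : ℝ) (hc0 : 0 < c) (hc1 : c < 1) :
    Tendsto (fun t : ℝ => (-Real.logb 2 (1 - dCA c t)) - Real.logb 2 (1 / t))
      (nhdsWithin 0 (Set.Ioi 0)) (nhds (Real.logb 2 ((1 - c) / c))) := by
  have hc1' : 0 < 1 - c := by linarith
  set g : ℝ → ℝ := fun t =>
    Real.logb 2 ((Real.sqrt (1 + 2 * c * (t - 1) + c ^ 2 * (1 + t) ^ 2) + (1 - c + c * t))
      / (2 * c)) with hgdef
  have hg : Tendsto g (nhdsWithin 0 (Set.Ioi 0)) (nhds (Real.logb 2 ((1 - c) / c))) := by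
    have hcont : ContinuousAt (fun t : ℝ =>
        (Real.sqrt (1 + 2 * c * (t - 1) + c ^ 2 * (1 + t) ^ 2) + (1 - c + c * t)) / (2 * c)) 0 :=
      Continuous.continuousAt (by continuity)
    have hval : (Real.sqrt (1 + 2 * c * ((0:ℝ) - 1) + c ^ 2 * (1 + 0) ^ 2) + (1 - c + c * 0))
        / (2 * c) = (1 - c) / c := by
      have h : (1:ℝ) + 2 * c * (0 - 1) + c ^ 2 * (1 + 0) ^ 2 = (1 - c) ^ 2 := by ring
      rw [h, Real.sqrt_sq hc1'.le]
      field_simp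
      ring
    have hlogb : ContinuousAt (Real.logb 2) ((1 - c) / c) :=
      Real.continuousAt_logb (by positivity)
    have h1 : Tendsto (fun t : ℝ =>
        (Real.sqrt (1 + 2 * c * (t - 1) + c ^ 2 * (1 + t) ^ 2) + (1 - c + c * t)) / (2 * c))
        (nhds 0) (nhds ((1 - c) / c)) := by
      have := hcont.tendsto
      rwa [hval] at this
    exact (hlogb.tendsto.comp h1).mono_left nhdsWithin_le_nhds
  refine hg.congr' ?_
  filter_upwards [self_mem_nhdsWithin] with t ht
  have ht : 0 < t := ht
  set S := Real.sqrt (1 + 2 * c * (t - 1) + c ^ 2 * (1 + t) ^ 2) with hSdef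
  set B := 1 - c + c * t with hBdef
  have hB : 0 < B := by nlinarith
  have hApos : (0:ℝ) < 1 + 2 * c * (t - 1) + c ^ 2 * (1 + t) ^ 2 := by nlinarith [sq_nonneg B]
  have hSsq : S ^ 2 = 1 + 2 * c * (t - 1) + c ^ 2 * (1 + t) ^ 2 := Real.sq_sqrt hApos.le
  have hSpos : 0 < S := Real.sqrt_pos.mpr hApos
  have hSB : 0 < S + B := by linarith
  have h1d : 1 - dCA c t = 2 * c * t / (S + B) := by
    rw [dCA, ← hSdef]
    have h0 : 1 - (1 + c + c * t - S) / (2 * c) = (S - B) / (2 * c) := by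
      rw [hBdef]
      field_simp
      ring
    rw [h0, div_eq_div_iff (by positivity) hSB.ne']
    linear_combination hSsq
  have key : (-Real.logb 2 (1 - dCA c t)) - Real.logb 2 (1 / t) = g t := by
    rw [hgdef, h1d]
    simp only [← hSdef, ← hBdef]
    rw [one_div, Real.logb_inv]
    rw [Real.logb_div (by positivity) hSB.ne', Real.logb_div hSB.ne' (by positivity),
      show 2 * c * t = (2 * c) * t by ring, Real.logb_mul (by positivity) ht.ne']
    ring
  exact key.symm
end
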